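/- arXiv:2010.13675 — 8 statements merged into one kernel-verified Lean document; each statement's English description precedes it below -/
import Mathlib

section
/- Let C be a category equipped with a factorization system (E, M), an initial object I and a terminal object F. Let I --e--> M₀ --m--> F be an (E,M)-factorization of the unique morphism I → F (so e ∈ E and m ∈ M). Then M₀ is (E,M)-minimal: for every object X of C there exist an object Z and morphisms Z → M₀ in E and Z → X in M. -/
open CategoryTheory

/-- A factorization system `(E, M)` on a category `C`. -/
structure FactSys {C : Type*} [Category C] (E M : MorphismProperty C) : Prop where
  E_iso : ∀ {X Y : C} (f : X ⟶ Y), IsIso f → E f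
  M_iso : ∀ {X Y : C} (f : X ⟶ Y), IsIso f → M f
  E_comp : ∀ {X Y Z : C} (f : X ⟶ Y) (g : Y ⟶ Z), E f → E g → E (f ≫ g)
  M_comp : ∀ {X Y Z : C} (f : X ⟶ Y) (g : Y ⟶ Z), M f → M g → M (f ≫ g)
  fact : ∀ {X Y : C} (f : X ⟶ Y), ∃ (Z : C) (e : X ⟶ Z) (m : Z ⟶ Y), E e ∧ M m ∧ e ≫ m = f
  diag : ∀ {X Y Z W : C} (e : X ⟶ Y) (m : Z ⟶ W) (u : X ⟶ Z) (v : Y ⟶ W),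
    E e → M m → e ≫ v = u ≫ m → ∃! d : Y ⟶ Z, e ≫ d = u ∧ d ≫ m = v

/-!
Factor `I ⟶ X` as `I ⟶ Z` in `E` followed by `Z ⟶ X` in `M`. Since `F` is terminal, the square
formed by `I ⟶ Z`, `Z ⟶ F`, `e` and `m` commutes, so it has a diagonal `d : Z ⟶ M₀` with
`(I ⟶ Z) ≫ d = e`. As `E` is left cancellable, `d ∈ E`.
-/

namespace FactSys

variable {C : Type*} [Category C] {E M : MorphismProperty C}

theorem isIso_of_comp_mem_E (fs : FactSys E M) {X Y Z : C} {a : X ⟶ Y} {m : Y ⟶ Z}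
    (ha : E a) (hm : M m) (ham : E (a ≫ m)) : IsIso m := by
  obtain ⟨s, ⟨has, hsm⟩, -⟩ := fs.diag (a ≫ m) m a (𝟙 Z) ham hm (by simp)
  -- `m ≫ s` and `𝟙 Y` are both diagonals of the square `a ≫ m = a ≫ m`.
  have hms : m ≫ s = 𝟙 Y :=
    (fs.diag a m a m ha hm rfl).unique
      ⟨by rw [← Category.assoc, has], by rw [Category.assoc, hsm, Category.comp_id]⟩
      ⟨Category.comp_id a, Category.id_comp m⟩
  exact ⟨s, hms, hsm⟩

theorem E_of_precomp (fs : FactSys E M) {X Y Z : C} {g : X ⟶ Y} {f : Y ⟶ Z}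
    (hg : E g) (hgf : E (g ≫ f)) : E f := by
  obtain ⟨W, e, m, he, hm, rfl⟩ := fs.fact f
  have : IsIso m :=
    fs.isIso_of_comp_mem_E (fs.E_comp g e hg he) hm (by rwa [Category.assoc])
  exact fs.E_comp e m he (fs.E_iso m this)

end FactSys

/-- the middle object of an `(E,M)`-factorization of the unique morphism
from an initial object to a terminal object is `(E,M)`-minimal. -/
theorem stmt0 {C : Type*} [Category C] (E M : MorphismProperty C) (fs : FactSys E M)
    (I F M₀ : C) (hI : Limits.IsInitial I) (hF : Limits.IsTerminal F)
    (e : I ⟶ M₀) (m : M₀ ⟶ F) (he : E e) (hm : M m) :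
    ∀ X : C, ∃ (Z : C) (p : Z ⟶ M₀) (i : Z ⟶ X), E p ∧ M i := by
  intro X
  obtain ⟨Z, e', m', he', hm', -⟩ := fs.fact (hI.to X)
  obtain ⟨d, ⟨hd, -⟩, -⟩ := fs.diag e' m e (hF.from Z) he' hm (hF.hom_ext _ _)
  exact ⟨Z, d, m', fs.E_of_precomp he' (hd ▸ he), hm'⟩
end

section
/- Let C be a category equipped with a factorization system (E, M), an initial object I and a terminal object F, and let M₀ be the middle object of an (E,M)-factorization of the unique morphism I → F. If K is an (E,M)-noetherian object of C that (E,M)-divides M₀, then K is isomorphic to M₀. -/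
/-!
Let `K ←ₑ Z ↣ₘ M₀` exhibit `K` as a divisor of `M₀`. Since `I` is initial and `I ⟶ M₀` lies in
`E`, the `M`-morphism `Z ⟶ M₀` is split epi; since `Z ⟶ M₀ ⟶ F` lies in `M` and `F` is terminal,
the `E`-morphism `Z ⟶ K` is split mono. A section of an `M`-morphism lies in `M` and a retraction
of an `E`-morphism lies in `E`, so this produces an idempotent of `K` in `E` and one in `M`.
Noetherianity forces each of them to be the identity (an idempotent repeated forever is an
infinite chain), so `Z ≅ K` and then `K ≅ M₀`.
-/
open CategoryTheory Limits

/-- An object `X` is `(E,M)`-noetherian: no infinite cochain of non-invertible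
`E`-quotients and no infinite chain of non-invertible `M`-subobjects. -/
def Noetherian {C : Type*} [Category C] (E M : MorphismProperty C) (X : C) : Prop :=
  (¬ ∃ (Y : ℕ → C) (f : ∀ n, X ⟶ Y n) (e : ∀ n, Y (n + 1) ⟶ Y n),
    (∀ n, E (f n)) ∧ (∀ n, E (e n)) ∧
    (∀ n, f (n + 1) ≫ e n = f n) ∧ (∀ n, ¬ IsIso (e n))) ∧
  (¬ ∃ (Z : ℕ → C) (g : ∀ n, Z n ⟶ X) (m : ∀ n, Z n ⟶ Z (n + 1)),
    (∀ n, M (g n)) ∧ (∀ n, M (m n)) ∧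
    (∀ n, m n ≫ g (n + 1) = g n) ∧ (∀ n, ¬ IsIso (m n)))

namespace FactSys

variable {C : Type*} [Category C] {E M : MorphismProperty C}

theorem isIso_of_comp_eq_id (fs : FactSys E M) {X Y : C} {e : X ⟶ Y} {m : Y ⟶ X} (he : E e)
    (hm : M m) (hem : e ≫ m = 𝟙 X) : IsIso e := by
  -- both `𝟙 Y` and `m ≫ e` are diagonals of the square `e ≫ m = e ≫ m`
  obtain ⟨g, -, hg⟩ := fs.diag e m e m he hm rfl
  have hid : 𝟙 Y = g := hg _ ⟨Category.comp_id e, Category.id_comp m⟩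
  have hme : m ≫ e = g := hg _ ⟨by simp [reassoc_of% hem], by simp [hem]⟩
  exact ⟨m, hem, hme.trans hid.symm⟩

theorem M_of_comp_eq_id (fs : FactSys E M) {X Y : C} {s : X ⟶ Y} {i : Y ⟶ X} (hi : M i)
    (hsi : s ≫ i = 𝟙 X) : M s := by
  obtain ⟨W, δ, μ, hδ, hμ, rfl⟩ := fs.fact s
  have : IsIso δ := fs.isIso_of_comp_eq_id hδ (fs.M_comp μ i hμ hi) (by simpa using hsi)
  exact fs.M_comp δ μ (fs.M_iso δ this) hμ

theorem E_of_comp_eq_id (fs : FactSys E M) {X Y : C} {p : X ⟶ Y} {r : Y ⟶ X} (hp : E p)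
    (hpr : p ≫ r = 𝟙 X) : E r := by
  obtain ⟨W, α, β, hα, hβ, rfl⟩ := fs.fact r
  have hpαβ : (p ≫ α) ≫ β = 𝟙 X := by simpa using hpr
  have : IsIso (p ≫ α) := fs.isIso_of_comp_eq_id (fs.E_comp p α hp hα) hβ hpαβ
  have : IsIso β := by
    rw [IsIso.eq_inv_of_hom_inv_id hpαβ]
    infer_instance
  exact fs.E_comp α β hα (fs.E_iso β this)

theorem exists_section_of_isInitial (fs : FactSys E M) {I X Z : C} (hI : IsInitial I)
    {e : I ⟶ X} (he : E e) {i : Z ⟶ X} (hi : M i) : ∃ s : X ⟶ Z, s ≫ i = 𝟙 X :=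
  let ⟨s, ⟨_, hsi⟩, _⟩ := fs.diag e i (hI.to Z) (𝟙 X) he hi (hI.hom_ext _ _)
  ⟨s, hsi⟩

theorem exists_retraction_of_isTerminal (fs : FactSys E M) {F X Y : C} (hF : IsTerminal F)
    {m : X ⟶ F} (hm : M m) {p : X ⟶ Y} (hp : E p) : ∃ r : Y ⟶ X, p ≫ r = 𝟙 X :=
  let ⟨r, ⟨hpr, _⟩, _⟩ := fs.diag p m (𝟙 X) (hF.from Y) hp hm (hF.hom_ext _ _)
  ⟨r, hpr⟩

end FactSys

namespace Noetherian

variable {C : Type*} [Category C] {E M : MorphismProperty C} {K : C}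

theorem eq_id_of_E_of_idem (hK : Noetherian E M K) {σ : K ⟶ K} (hσ : E σ)
    (hσσ : σ ≫ σ = σ) : σ = 𝟙 K := by
  have : IsIso σ := by
    by_contra hσ_iso
    exact hK.1 ⟨fun _ => K, fun _ => σ, fun _ => σ, fun _ => hσ, fun _ => hσ,
      fun _ => hσσ, fun _ => hσ_iso⟩
  rw [← cancel_epi σ, hσσ, Category.comp_id]

theorem eq_id_of_M_of_idem (hK : Noetherian E M K) {τ : K ⟶ K} (hτ : M τ)
    (hττ : τ ≫ τ = τ) : τ = 𝟙 K := by
  have : IsIso τ := by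
    by_contra hτ_iso
    exact hK.2 ⟨fun _ => K, fun _ => τ, fun _ => τ, fun _ => hτ, fun _ => hτ,
      fun _ => hττ, fun _ => hτ_iso⟩
  rw [← cancel_epi τ, hττ, Category.comp_id]

theorem retraction_comp_eq_id_of_E (hK : Noetherian E M K) (fs : FactSys E M) {X : C}
    {p : X ⟶ K} {r : K ⟶ X} (hp : E p) (hpr : p ≫ r = 𝟙 X) : r ≫ p = 𝟙 K :=
  hK.eq_id_of_E_of_idem (fs.E_comp r p (fs.E_of_comp_eq_id hp hpr) hp)
    (by simp [reassoc_of% hpr])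

theorem comp_section_eq_id_of_M (hK : Noetherian E M K) (fs : FactSys E M) {X : C}
    {s : X ⟶ K} {t : K ⟶ X} (ht : M t) (hst : s ≫ t = 𝟙 X) : t ≫ s = 𝟙 K :=
  hK.eq_id_of_M_of_idem (fs.M_comp t s ht (fs.M_of_comp_eq_id ht hst))
    (by simp [reassoc_of% hst])

end Noetherian

/-- an `(E,M)`-noetherian object that `(E,M)`-divides the middle object `M₀`
of an `(E,M)`-factorization of the unique morphism from an initial object to a terminal
object is isomorphic to `M₀`. -/
theorem stmt1 {C : Type*} [Category C] (E M : MorphismProperty C) (fs : FactSys E M)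
    (I F M₀ : C) (hI : Limits.IsInitial I) (hF : Limits.IsTerminal F)
    (e : I ⟶ M₀) (m : M₀ ⟶ F) (he : E e) (hm : M m)
    (K : C) (hK : Noetherian E M K)
    (hdiv : ∃ (Z : C) (p : Z ⟶ K) (i : Z ⟶ M₀), E p ∧ M i) :
    Nonempty (K ≅ M₀) := by
  obtain ⟨Z, p, i, hp, hi⟩ := hdiv
  obtain ⟨s, hsi⟩ := fs.exists_section_of_isInitial hI he hi
  obtain ⟨r, hpr⟩ := fs.exists_retraction_of_isTerminal hF (fs.M_comp i m hi hm) hp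
  have hrp : r ≫ p = 𝟙 K := hK.retraction_comp_eq_id_of_E fs hp hpr
  have hri : M (r ≫ i) := fs.M_comp r i (fs.M_iso r ⟨p, hrp, hpr⟩) hi
  have hsp : (s ≫ p) ≫ r ≫ i = 𝟙 M₀ := by simp [reassoc_of% hpr, hsi]
  exact ⟨⟨r ≫ i, s ≫ p, hK.comp_section_eq_id_of_M fs hri hsp, hsp⟩⟩
end

section
/- Fix a type B. A type X is finite if and only if the following two conditions hold: (i) there is no sequence of types (Y_n)_{n∈ℕ} together with Kleisli morphisms f_n : X ⇸ Y_n in Epi_KlT and e_n : Y_{n+1} ⇸ Y_n in Epi_KlT such that e_n ∘ f_{n+1} = f_n (Kleisli composition) for all n and no e_n is a Kleisli isomorphism; and (ii) there is no sequence of types (Z_n)_{n∈ℕ} together with Kleisli morphisms g_n : Z_n ⇸ X in Mono_KlT and m_n : Z_n ⇸ Z_{n+1} in Mono_KlT such that g_{n+1} ∘ m_n = g_n for all n and no m_n is a Kleisli isomorphism. -/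
/-- A Kleisli morphism `X ⇸ Y` for the monad `T Z = List B × Z ⊕ Unit`. -/
def Kl (B X Y : Type) : Type := X → (List B × Y) ⊕ Unit

/-- Kleisli composition: `klComp f g` is "first `f`, then `g`" (i.e. `g ∘ f`). -/
def klComp {B X Y Z : Type} (f : Kl B X Y) (g : Kl B Y Z) : Kl B X Z := fun x =>
  match f x with
  | Sum.inl (u, y) =>
    match g y with
    | Sum.inl (v, z) => Sum.inl (u ++ v, z)
    | Sum.inr _ => Sum.inr ()
  | Sum.inr _ => Sum.inr ()

/-- `f ∈ Epi_KlT`: every `y` is hit by some defined value of `f`. -/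
def KlEpi {B X Y : Type} (f : Kl B X Y) : Prop :=
  ∀ y : Y, ∃ (x : X) (u : List B), f x = Sum.inl (u, y)

/-- `f ∈ Mono_KlT`: `f` is everywhere defined, its second component is injective and
its first component is constantly the empty word. -/
def KlMono {B X Y : Type} (f : Kl B X Y) : Prop :=
  ∃ h : X → Y, Function.Injective h ∧ ∀ x, f x = Sum.inl ([], h x)

/-- `f` is a Kleisli isomorphism: everywhere defined, second component bijective,
first component constantly the empty word. -/
def KlIso {B X Y : Type} (f : Kl B X Y) : Prop :=
  ∃ h : X → Y, Function.Bijective h ∧ ∀ x, f x = Sum.inl ([], h x)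

/-!
If `X` is finite, every `Mono_KlT` morphism into `X` has a finite domain, and a non-invertible
one strictly raises cardinality, so a chain of them cannot be infinite. For an `Epi_KlT` chain
`f n = e n ∘ f (n + 1)`, the cardinalities of the `Y n` increase and stay below `|X|`, while the
word length of `f n x` (taken to be `⊤` where `f n x` is undefined) decreases in `n` for every
`x`. When neither changes, `e n` is a Kleisli isomorphism; so these quantities form a strictly
decreasing sequence in a well-founded order. Conversely an infinite `X` carries the strictly
increasing chain of finite subsets `ι '' {k | k < n}` for an embedding `ι : ℕ ↪ X`.
-/

open Function

variable {B X Y Z : Type}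

section Pure

def klPure (h : X → Y) : Kl B X Y := fun x => Sum.inl ([], h x)

lemma klMono_klPure {h : X → Y} (hh : Injective h) : KlMono (klPure (B := B) h) :=
  ⟨h, hh, fun _ => rfl⟩

lemma KlIso.bijective_of_klPure {h : X → Y} (hiso : KlIso (klPure (B := B) h)) : Bijective h := by
  obtain ⟨h', hbij, hh'⟩ := hiso
  convert hbij using 1
  funext x
  simpa [klPure] using hh' x

lemma not_klIso_klPure_inclusion {S T : Set X} (hST : S ⊂ T) :
    ¬ KlIso (klPure (B := B) (Set.inclusion hST.subset)) := fun hiso =>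
  hST.ne (Set.eq_of_inclusion_surjective hiso.bijective_of_klPure.surjective)

end Pure

section Mono

lemma KlMono.card_le [Finite Y] {f : Kl B X Y} (hf : KlMono f) : Nat.card X ≤ Nat.card Y := by
  obtain ⟨h, hinj, -⟩ := hf
  exact Nat.card_le_card_of_injective h hinj

lemma KlMono.card_lt [Finite Y] {f : Kl B X Y} (hf : KlMono f) (hiso : ¬ KlIso f) :
    Nat.card X < Nat.card Y := by
  obtain ⟨h, hinj, hval⟩ := hf
  refine (Nat.card_le_card_of_injective h hinj).lt_of_ne fun hcard => hiso ⟨h, ?_, hval⟩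
  exact (Nat.bijective_iff_injective_and_card h).2 ⟨hinj, hcard⟩

lemma not_klMono_chain [Finite X] {Z : ℕ → Type} {g : ∀ n, Kl B (Z n) X}
    {m : ∀ n, Kl B (Z n) (Z (n + 1))} (hg : ∀ n, KlMono (g n)) (hm : ∀ n, KlMono (m n))
    (hiso : ∀ n, ¬ KlIso (m n)) : False := by
  have hfin : ∀ n, Finite (Z n) := fun n => by
    obtain ⟨h, hinj, -⟩ := hg n
    exact Finite.of_injective h hinj
  have hmono : StrictMono fun n => Nat.card (Z n) :=
    strictMono_nat_of_lt_succ fun n => (hm n).card_lt (hiso n)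
  have hbound := (hg (Nat.card X + 1)).card_le
  have : Nat.card X + 1 ≤ Nat.card (Z (Nat.card X + 1)) := hmono.id_le _
  omega

lemma exists_klMono_chain_of_strictMono {S : ℕ → Set X} (hS : StrictMono S) :
    ∃ (Z : ℕ → Type) (g : ∀ n, Kl B (Z n) X) (m : ∀ n, Kl B (Z n) (Z (n + 1))),
      (∀ n, KlMono (g n)) ∧ (∀ n, KlMono (m n)) ∧
      (∀ n, klComp (m n) (g (n + 1)) = g n) ∧ (∀ n, ¬ KlIso (m n)) :=
  ⟨fun n => S n, fun _ => klPure Subtype.val,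
    fun n => klPure (Set.inclusion (hS n.lt_succ_self).subset),
    fun _ => klMono_klPure Subtype.val_injective,
    fun _ => klMono_klPure (Set.inclusion_injective _),
    fun _ => rfl, fun n => not_klIso_klPure_inclusion (hS n.lt_succ_self)⟩

lemma exists_strictMono_nat_set [Infinite X] : ∃ S : ℕ → Set X, StrictMono S := by
  let ι := Infinite.natEmbedding X
  refine ⟨fun n => ι '' Set.Iio n, strictMono_nat_of_lt_succ fun n => ?_⟩
  refine (Set.ssubset_iff_of_subset (Set.image_mono (Set.Iio_subset_Iio n.le_succ))).2
    ⟨ι n, ⟨n, n.lt_succ_self, rfl⟩, ?_⟩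
  rintro ⟨k, hk, hkn⟩
  exact (Set.mem_Iio.1 hk).ne (ι.injective hkn)

end Mono

section Epi

def klWeight : (List B × Y) ⊕ Unit → ℕ∞
  | Sum.inl (u, _) => u.length
  | Sum.inr _ => ⊤

lemma klComp_eq_inl_iff {f : Kl B X Y} {g : Kl B Y Z} {x : X} {w : List B} {z : Z} :
    klComp f g x = Sum.inl (w, z) ↔
      ∃ u y v, f x = Sum.inl (u, y) ∧ g y = Sum.inl (v, z) ∧ w = u ++ v := by
  unfold klComp
  rcases f x with ⟨u, y⟩ | _
  · rcases hg : g y with ⟨v, z'⟩ | _ <;> simp [hg, eq_comm, and_comm]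
  · simp

lemma klWeight_le_klWeight_klComp (f : Kl B X Y) (g : Kl B Y Z) (x : X) :
    klWeight (f x) ≤ klWeight (klComp f g x) := by
  rcases hfg : klComp f g x with ⟨w, z⟩ | _
  · obtain ⟨u, y, v, hf, -, rfl⟩ := klComp_eq_inl_iff.1 hfg
    simp [hf, klWeight]
  · exact le_top

lemma KlEpi.exists_injective {f : Kl B X Y} (hf : KlEpi f) : ∃ s : Y → X, Injective s := by
  choose s u hs using hf
  refine ⟨s, fun a b hab => ?_⟩
  exact (Prod.mk.inj (Sum.inl.inj ((hs a).symm.trans (hab ▸ hs b)))).2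

lemma klIso_of_klWeight_klComp_eq [Finite Y] {f' : Kl B X Y} {e : Kl B Y Z} (hf' : KlEpi f')
    (he : KlEpi e) (hw : ∀ x, klWeight (klComp f' e x) = klWeight (f' x))
    (hcard : Nat.card Y = Nat.card Z) : KlIso e := by
  have hempty : ∀ y, ∃ z, e y = Sum.inl ([], z) := by
    intro y
    obtain ⟨x, u, hx⟩ := hf' y
    have hwx := hw x
    rcases hfe : klComp f' e x with ⟨w, z⟩ | _
    · obtain ⟨u', y', v, hx', he', rfl⟩ := klComp_eq_inl_iff.1 hfe
      rw [hx] at hx'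
      obtain ⟨rfl, rfl⟩ := Prod.mk.inj (Sum.inl.inj hx')
      simp only [hfe, hx, klWeight, List.length_append, Nat.cast_inj] at hwx
      exact ⟨z, by rwa [List.eq_nil_of_length_eq_zero (by omega : v.length = 0)] at he'⟩
    · simp [hfe, hx, klWeight] at hwx
  choose h hh using hempty
  have hsurj : Surjective h := fun z => by
    obtain ⟨y, v, hy⟩ := he z
    simp only [hh y, Sum.inl.injEq, Prod.mk.injEq] at hy
    exact ⟨y, hy.2⟩
  exact ⟨h, (Nat.bijective_iff_surjective_and_card h).2 ⟨hsurj, hcard⟩, hh⟩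

lemma not_klEpi_chain [Finite X] {Y : ℕ → Type} {f : ∀ n, Kl B X (Y n)}
    {e : ∀ n, Kl B (Y (n + 1)) (Y n)} (hf : ∀ n, KlEpi (f n)) (he : ∀ n, KlEpi (e n))
    (hcomp : ∀ n, klComp (f (n + 1)) (e n) = f n) (hiso : ∀ n, ¬ KlIso (e n)) : False := by
  have hfin : ∀ n, Finite (Y n) := fun n => by
    obtain ⟨s, hs⟩ := (hf n).exists_injective
    exact Finite.of_injective s hs
  have hcard_le : ∀ n, Nat.card (Y n) ≤ Nat.card X := fun n => by
    obtain ⟨s, hs⟩ := (hf n).exists_injective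
    exact Nat.card_le_card_of_injective s hs
  have hcard_mono : ∀ n, Nat.card (Y n) ≤ Nat.card (Y (n + 1)) := fun n => by
    obtain ⟨s, hs⟩ := (he n).exists_injective
    exact Nat.card_le_card_of_injective s hs
  let Φ : ℕ → (X → ℕ∞) × ℕ := fun n => (fun x => klWeight (f n x), Nat.card X - Nat.card (Y n))
  refine not_strictAnti_of_wellFoundedLT Φ (strictAnti_nat_of_succ_lt fun n => ?_)
  have := hcard_le (n + 1)
  have := hcard_mono n
  refine lt_of_le_of_ne (Prod.mk_le_mk.2 ⟨fun x => ?_, ?_⟩) fun hΦ => hiso n ?_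
  · simpa only [← hcomp n] using klWeight_le_klWeight_klComp (f (n + 1)) (e n) x
  · omega
  · obtain ⟨hweight, hcard⟩ := Prod.mk.inj hΦ
    refine klIso_of_klWeight_klComp_eq (hf (n + 1)) (he n) (fun x => ?_) ?_
    · rw [hcomp n]
      exact (congrFun hweight x).symm
    · omega

end Epi

/-- `X` is finite iff it is `(Epi_KlT, Mono_KlT)`-noetherian. -/
theorem stmt3 (B : Type) (X : Type) :
    Finite X ↔
      (¬ ∃ (Y : ℕ → Type) (f : ∀ n, Kl B X (Y n)) (e : ∀ n, Kl B (Y (n + 1)) (Y n)),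
        (∀ n, KlEpi (f n)) ∧ (∀ n, KlEpi (e n)) ∧
        (∀ n, klComp (f (n + 1)) (e n) = f n) ∧ (∀ n, ¬ KlIso (e n))) ∧
      (¬ ∃ (Z : ℕ → Type) (g : ∀ n, Kl B (Z n) X) (m : ∀ n, Kl B (Z n) (Z (n + 1))),
        (∀ n, KlMono (g n)) ∧ (∀ n, KlMono (m n)) ∧
        (∀ n, klComp (m n) (g (n + 1)) = g n) ∧ (∀ n, ¬ KlIso (m n))) := by
  constructor
  · intro _
    exact ⟨fun ⟨_, _, _, hf, he, hcomp, hiso⟩ => not_klEpi_chain hf he hcomp hiso,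
      fun ⟨_, _, _, hg, hm, _, hiso⟩ => not_klMono_chain hg hm hiso⟩
  · rintro ⟨-, hno_mono_chain⟩
    by_contra hX
    have : Infinite X := not_finite_iff_infinite.1 hX
    obtain ⟨S, hS⟩ := exists_strictMono_nat_set (X := X)
    exact hno_mono_chain (exists_klMono_chain_of_strictMono hS)
end

section
/- Suppose C has the coproduct ∐_{w ∈ List A} X of copies of X indexed by List A, with injections ι_w. Define Init(ℓ) = (∐_{List A} X, ι_ε, δ, o), where ε = [] is the empty word, δ_a is the unique morphism with δ_a ∘ ι_w = ι_{w ++ [a]} for all w, and o is the unique morphism with o ∘ ι_w = ℓ(w) for all w. Then Init(ℓ) is an automaton accepting ℓ, and for every automaton B accepting ℓ there exists a unique morphism of automata from Init(ℓ) to B. -/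
/-!
The injection `ι w` of the copower is the state reached from `ι []` by reading `w`, which
gives acceptance. For an automaton `B` accepting `ℓ`, the only candidate morphism is the
copairing of the runs `B.init ≫ B.runFrom w`: any morphism of automata `ψ` makes
`w ↦ ι w ≫ ψ` satisfy the same recursion along `w ++ [a]` as these runs. Conversely, the
copairing is a morphism because maps out of the copower are determined by their composites
with the injections.
-/

open CategoryTheory

/-- A word automaton in a category `C`, with input object `X` and output object `Y`. -/
structure Automaton (A : Type) {C : Type*} [Category C] (X Y : C) where
  S : C
  init : X ⟶ S
  δ : A → (S ⟶ S)
  out : S ⟶ Y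

namespace Automaton

variable {A : Type} {C : Type*} [Category C] {X Y : C}

/-- The composite of the transitions along a word. -/
def runFrom (Au : Automaton A X Y) : List A → (Au.S ⟶ Au.S)
  | [] => 𝟙 Au.S
  | a :: w => Au.δ a ≫ Au.runFrom w

/-- The value of the automaton on a word: `o ∘ δ_{aₙ} ∘ ⋯ ∘ δ_{a₁} ∘ i`. -/
def value (Au : Automaton A X Y) (w : List A) : X ⟶ Y :=
  Au.init ≫ Au.runFrom w ≫ Au.out

/-- The automaton accepts the language `ℓ`. -/
def Accepts (Au : Automaton A X Y) (ℓ : List A → (X ⟶ Y)) : Prop :=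
  ∀ w : List A, Au.value w = ℓ w

theorem runFrom_append (Au : Automaton A X Y) (w v : List A) :
    Au.runFrom (w ++ v) = Au.runFrom w ≫ Au.runFrom v := by
  induction w with
  | nil => simp [runFrom]
  | cons a w ih => simp [runFrom, ih]

theorem runFrom_append_singleton (Au : Automaton A X Y) (w : List A) (a : A) :
    Au.runFrom (w ++ [a]) = Au.runFrom w ≫ Au.δ a := by
  simp [runFrom_append, runFrom]

theorem eq_init_comp_runFrom (Au : Automaton A X Y) (f : List A → (X ⟶ Au.S))
    (h_nil : f [] = Au.init) (h_snoc : ∀ w a, f (w ++ [a]) = f w ≫ Au.δ a) (w : List A) :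
    f w = Au.init ≫ Au.runFrom w := by
  induction w using List.reverseRecOn with
  | nil => simp [h_nil, runFrom]
  | append_singleton w a ih => rw [h_snoc, ih, runFrom_append_singleton, Category.assoc]

end Automaton

theorem stmt5_general {A : Type} {C : Type*} [Category C] {X Y : C}
    (ℓ : List A → (X ⟶ Y))
    (P : C) (ι : List A → (X ⟶ P))
    (hP : ∀ (Z : C) (f : List A → (X ⟶ Z)), ∃! g : P ⟶ Z, ∀ w, ι w ≫ g = f w)
    (δ : A → (P ⟶ P)) (hδ : ∀ (a : A) (w : List A), ι w ≫ δ a = ι (w ++ [a]))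
    (o : P ⟶ Y) (ho : ∀ w, ι w ≫ o = ℓ w) :
    (Automaton.mk P (ι []) δ o).Accepts ℓ ∧
    ∀ B : Automaton A X Y, B.Accepts ℓ →
      ∃! φ : P ⟶ B.S,
        ι [] ≫ φ = B.init ∧ (∀ a, δ a ≫ φ = φ ≫ B.δ a) ∧ φ ≫ B.out = o := by
  have ext {Z : C} {g₁ g₂ : P ⟶ Z} (h : ∀ w, ι w ≫ g₁ = ι w ≫ g₂) : g₁ = g₂ :=
    (hP Z fun w => ι w ≫ g₁).unique (fun _ => rfl) fun w => (h w).symm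
  have reach (w : List A) : ι w = ι [] ≫ (Automaton.mk P (ι []) δ o).runFrom w :=
    (Automaton.mk P (ι []) δ o).eq_init_comp_runFrom ι rfl (fun w a => (hδ a w).symm) w
  refine ⟨fun w => by rw [Automaton.value, ← Category.assoc, ← reach, ho], fun B hB => ?_⟩
  obtain ⟨φ, hφ, -⟩ := hP B.S fun w => B.init ≫ B.runFrom w
  refine ⟨φ, ⟨?_, fun a => ext fun w => ?_, ext fun w => ?_⟩, ?_⟩
  · rw [hφ]
    exact Category.comp_id _
  · rw [← Category.assoc, hδ, hφ, Automaton.runFrom_append_singleton, ← Category.assoc, ← hφ,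
      Category.assoc]
  · rw [← Category.assoc, hφ, ho, Category.assoc]
    exact hB w
  · rintro ψ ⟨h_init, h_δ, -⟩
    refine (hP B.S _).unique (B.eq_init_comp_runFrom (fun w => ι w ≫ ψ) h_init fun w a => ?_) hφ
    rw [← hδ, Category.assoc, h_δ, Category.assoc]

/-- the automaton built on the copower `∐_{List A} X` is an automaton
accepting `ℓ`, and it is initial among automata accepting `ℓ`. -/
theorem stmt5 {A : Type} [Fintype A] {C : Type*} [Category C] {X Y : C}
    (ℓ : List A → (X ⟶ Y))
    (P : C) (ι : List A → (X ⟶ P))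
    (hP : ∀ (Z : C) (f : List A → (X ⟶ Z)), ∃! g : P ⟶ Z, ∀ w, ι w ≫ g = f w)
    (δ : A → (P ⟶ P)) (hδ : ∀ (a : A) (w : List A), ι w ≫ δ a = ι (w ++ [a]))
    (o : P ⟶ Y) (ho : ∀ w, ι w ≫ o = ℓ w) :
    (Automaton.mk P (ι []) δ o).Accepts ℓ ∧
    ∀ B : Automaton A X Y, B.Accepts ℓ →
      ∃! φ : P ⟶ B.S,
        ι [] ≫ φ = B.init ∧ (∀ a, δ a ≫ φ = φ ≫ B.δ a) ∧ φ ≫ B.out = o :=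
  stmt5_general ℓ P ι hP δ hδ o ho
end

section
/- Suppose C has the product ∏_{w ∈ List A} Y of copies of Y indexed by List A, with projections π_w. Define Final(ℓ) = (∏_{List A} Y, i, δ, π_ε), where ε = [] is the empty word, i is the unique morphism with π_w ∘ i = ℓ(w) for all w, and δ_a is the unique morphism with π_w ∘ δ_a = π_{[a] ++ w} for all w. Then Final(ℓ) is an automaton accepting ℓ, and for every automaton B accepting ℓ there exists a unique morphism of automata from B to Final(ℓ). -/
/-!
The state space `∏_{List A} Y` records, for each word `w`, the output observed after reading `w`;
`δ_a` shifts this record by `a`, so the run of the final automaton along `w` followed by `π_ε`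
is `π_w`. A morphism from an automaton `B` into it is therefore forced, component by component,
to send a state to its observations `w ↦ o ∘ δ_w`; this map commutes with the transitions by
construction, and with the initial maps because `B` accepts `ℓ`.
-/

open CategoryTheory

namespace Automaton

variable {A : Type} {C : Type*} [Category C] {X Y : C}

def observe (Au : Automaton A X Y) (w : List A) : Au.S ⟶ Y :=
  Au.runFrom w ≫ Au.out

theorem value_eq_init_comp_observe (Au : Automaton A X Y) (w : List A) :
    Au.value w = Au.init ≫ Au.observe w :=
  rfl

theorem observe_nil (Au : Automaton A X Y) : Au.observe [] = Au.out :=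
  Category.id_comp _

theorem observe_cons (Au : Automaton A X Y) (a : A) (w : List A) :
    Au.observe (a :: w) = Au.δ a ≫ Au.observe w :=
  Category.assoc _ _ _

theorem comp_observe_of_comm {B B' : Automaton A X Y} {φ : B.S ⟶ B'.S}
    (hδ : ∀ a, B.δ a ≫ φ = φ ≫ B'.δ a) (hout : φ ≫ B'.out = B.out) (w : List A) :
    φ ≫ B'.observe w = B.observe w := by
  induction w with
  | nil => rw [observe_nil, observe_nil, hout]
  | cons a w ih => rw [observe_cons, observe_cons, ← Category.assoc, ← hδ, Category.assoc, ih]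

theorem observe_mk_of_shift {S : C} (i : X ⟶ S) (π : List A → (S ⟶ Y)) (δ : A → (S ⟶ S))
    (hδ : ∀ (a : A) (w : List A), δ a ≫ π w = π ([a] ++ w)) (w : List A) :
    (Automaton.mk S i δ (π [])).observe w = π w := by
  induction w with
  | nil => exact observe_nil _
  | cons a w ih => rw [observe_cons, ih]; exact hδ a w

end Automaton

theorem CategoryTheory.hom_ext_of_existsUnique_lift {ι : Type*} {C : Type*} [Category C]
    {R Y : C} {π : ι → (R ⟶ Y)}
    (hR : ∀ (Z : C) (f : ι → (Z ⟶ Y)), ∃! g : Z ⟶ R, ∀ w, g ≫ π w = f w)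
    {Z : C} {g h : Z ⟶ R} (H : ∀ w, g ≫ π w = h ≫ π w) : g = h :=
  (hR Z fun w => h ≫ π w).unique H fun _ => rfl

theorem stmt6_general {A : Type} {C : Type*} [Category C] {X Y : C}
    (ℓ : List A → (X ⟶ Y))
    (R : C) (π : List A → (R ⟶ Y))
    (hR : ∀ (Z : C) (f : List A → (Z ⟶ Y)), ∃! g : Z ⟶ R, ∀ w, g ≫ π w = f w)
    (i : X ⟶ R) (hi : ∀ w, i ≫ π w = ℓ w)
    (δ : A → (R ⟶ R)) (hδ : ∀ (a : A) (w : List A), δ a ≫ π w = π ([a] ++ w)) :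
    (Automaton.mk R i δ (π [])).Accepts ℓ ∧
    ∀ B : Automaton A X Y, B.Accepts ℓ →
      ∃! φ : B.S ⟶ R,
        B.init ≫ φ = i ∧ (∀ a, B.δ a ≫ φ = φ ≫ δ a) ∧ φ ≫ π [] = B.out := by
  have hobs := Automaton.observe_mk_of_shift i π δ hδ
  refine ⟨fun w => by rw [Automaton.value_eq_init_comp_observe, hobs, hi], fun B hB => ?_⟩
  obtain ⟨φ, hφ, huniq⟩ := hR B.S B.observe
  refine ⟨φ, ⟨?init, ?trans, ?out⟩, fun ψ ⟨_, hψδ, hψout⟩ => huniq ψ fun w => ?_⟩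
  case init =>
    refine hom_ext_of_existsUnique_lift hR fun w => ?_
    rw [Category.assoc, hφ, ← Automaton.value_eq_init_comp_observe, hB, hi]
  case trans =>
    intro a
    refine hom_ext_of_existsUnique_lift hR fun w => ?_
    rw [Category.assoc, hφ, Category.assoc, hδ, hφ, List.singleton_append, Automaton.observe_cons]
  case out => rw [hφ, Automaton.observe_nil]
  · rw [← hobs, Automaton.comp_observe_of_comm (B' := ⟨R, i, δ, π []⟩) hψδ hψout]

/-- the automaton built on the power `∏_{List A} Y` is an automaton
accepting `ℓ`, and it is final among automata accepting `ℓ`. -/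
theorem stmt6 {A : Type} [Fintype A] {C : Type*} [Category C] {X Y : C}
    (ℓ : List A → (X ⟶ Y))
    (R : C) (π : List A → (R ⟶ Y))
    (hR : ∀ (Z : C) (f : List A → (Z ⟶ Y)), ∃! g : Z ⟶ R, ∀ w, g ≫ π w = f w)
    (i : X ⟶ R) (hi : ∀ w, i ≫ π w = ℓ w)
    (δ : A → (R ⟶ R)) (hδ : ∀ (a : A) (w : List A), δ a ≫ π w = π ([a] ++ w)) :
    (Automaton.mk R i δ (π [])).Accepts ℓ ∧
    ∀ B : Automaton A X Y, B.Accepts ℓ →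
      ∃! φ : B.S ⟶ R,
        B.init ≫ φ = i ∧ (∀ a, B.δ a ≫ φ = φ ≫ δ a) ∧ φ ≫ π [] = B.out :=
  stmt6_general ℓ R π hR i hi δ hδ
end

section
/- Let (B1, B2, (i_q)_{q∈Q}, (δ_a)_{a∈A}, ē, (o_t)_{t∈T}) be a coherent (Q,T)-biautomaton. Then: (i) if q, q' ∈ Q, a, a' ∈ A and t, t' ∈ T satisfy q ++ [a] ++ t = q' ++ [a'] ++ t' as words, then o_t ∘ δ_a ∘ i_q = o_{t'} ∘ δ_{a'} ∘ i_{q'}; (ii) if q ++ t = q' ++ t' then o_t ∘ ē ∘ i_q = o_{t'} ∘ ē ∘ i_{q'}; (iii) if q ++ [a] ++ t = q' ++ t' then o_t ∘ δ_a ∘ i_q = o_{t'} ∘ ē ∘ i_{q'}. -/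
open CategoryTheory

/-- A `(Q,T)`-biautomaton in a category `C` with input object `X` and output object `Y`. -/
structure Biauto (A : Type) {C : Type*} [Category C] (X Y : C)
    (Q T : Set (List A)) where
  B1 : C
  B2 : C
  i : (q : List A) → q ∈ Q → (X ⟶ B1)
  δ : A → (B1 ⟶ B2)
  eb : B1 ⟶ B2
  o : (t : List A) → t ∈ T → (B2 ⟶ Y)

namespace Biauto

variable {A : Type} {C : Type*} [Category C] {X Y : C} {Q T : Set (List A)}

/-- The coherence conditions of a `(Q,T)`-biautomaton. -/
def Coherent (B : Biauto A X Y Q T) : Prop :=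
  (∀ (q : List A) (hq : q ∈ Q) (a : A) (h : q ++ [a] ∈ Q),
    B.i q hq ≫ B.δ a = B.i (q ++ [a]) h ≫ B.eb) ∧
  (∀ (t : List A) (ht : t ∈ T) (a : A) (h : [a] ++ t ∈ T),
    B.δ a ≫ B.o t ht = B.eb ≫ B.o ([a] ++ t) h)

/-- Consistency of a `(Q,T)`-biautomaton with the language `ℓ`. -/
def Consistent (B : Biauto A X Y Q T) (ℓ : List A → (X ⟶ Y)) : Prop :=
  (∀ (q : List A) (hq : q ∈ Q) (a : A) (t : List A) (ht : t ∈ T),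
    B.i q hq ≫ B.δ a ≫ B.o t ht = ℓ (q ++ [a] ++ t)) ∧
  (∀ (q : List A) (hq : q ∈ Q) (t : List A) (ht : t ∈ T),
    B.i q hq ≫ B.eb ≫ B.o t ht = ℓ (q ++ t))

/-- `(f1, f2)` is a morphism of `(Q,T)`-biautomata from `B` to `B'`. -/
def IsHom (B B' : Biauto A X Y Q T) (f1 : B.B1 ⟶ B'.B1) (f2 : B.B2 ⟶ B'.B2) : Prop :=
  (∀ (q : List A) (hq : q ∈ Q), B.i q hq ≫ f1 = B'.i q hq) ∧
  (∀ a : A, B.δ a ≫ f2 = f1 ≫ B'.δ a) ∧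
  (B.eb ≫ f2 = f1 ≫ B'.eb) ∧
  (∀ (t : List A) (ht : t ∈ T), f2 ≫ B'.o t ht = B.o t ht)

end Biauto

/-!
Coherence lets `ē` slide across one letter: `i_q ≫ ē ≫ o_{a t} = i_q ≫ δ_a ≫ o_t = i_{q a} ≫ ē ≫ o_t`.
Sliding it across a whole block shows that `i_q ≫ ē ≫ o_t` depends only on the word `q t`.
A `δ_a`-composite turns into an `ē`-composite as soon as `q a ∈ Q` or `a t ∈ T`, and whenever the
same word has a second factorization, prefix closure of `Q` or suffix closure of `T` supplies one
of these memberships.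
-/

namespace List

variable {α : Type*}

theorem append_cons_eq_append_cases {q t q' t' : List α} {a : α} (h : q ++ a :: t = q' ++ t') :
    (∃ m, q = q' ++ m ∧ t' = m ++ a :: t) ∨ (∃ m, q' = q ++ a :: m ∧ t = m ++ t') := by
  rcases append_eq_append_iff.mp h with ⟨m, hq', hat⟩ | ⟨m, hq, ht'⟩
  · rcases cons_eq_append_iff.mp hat with ⟨rfl, rfl⟩ | ⟨m', rfl, rfl⟩
    · exact Or.inl ⟨[], by simp [hq'], rfl⟩
    · exact Or.inr ⟨m', hq', rfl⟩
  · exact Or.inl ⟨m, hq, ht'⟩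

theorem append_cons_eq_append_cons_cases {q t q' t' : List α} {a a' : α}
    (h : q ++ a :: t = q' ++ a' :: t') :
    (q = q' ∧ a = a' ∧ t = t') ∨ (∃ m, q' = q ++ a :: m) ∨ (∃ m, q = q' ++ a' :: m) := by
  rcases append_cons_eq_append_cases h with ⟨_ | ⟨b, m⟩, rfl, hm⟩ | ⟨m, rfl, -⟩
  · obtain ⟨rfl, rfl⟩ := cons_eq_cons.mp hm
    exact Or.inl ⟨by simp, rfl, rfl⟩
  · obtain ⟨rfl, -⟩ := cons_eq_cons.mp hm
    exact Or.inr (Or.inr ⟨m, rfl⟩)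
  · exact Or.inr (Or.inl ⟨m, rfl⟩)

end List

namespace Biauto

variable {A : Type} {C : Type*} [Category C] {X Y : C} {Q T : Set (List A)}
  {B : Biauto A X Y Q T}

namespace Coherent

theorem i_δ_o_eq_i_append_eb_o (hB : B.Coherent) {q : List A} {a : A} (hq : q ∈ Q)
    (hqa : q ++ [a] ∈ Q) {t : List A} (ht : t ∈ T) :
    B.i q hq ≫ B.δ a ≫ B.o t ht = B.i (q ++ [a]) hqa ≫ B.eb ≫ B.o t ht := by
  rw [← Category.assoc, hB.1 q hq a hqa, Category.assoc]

theorem i_δ_o_eq_i_eb_o_cons (hB : B.Coherent) {q : List A} {a : A} (hq : q ∈ Q)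
    {t : List A} (ht : t ∈ T) (hat : a :: t ∈ T) :
    B.i q hq ≫ B.δ a ≫ B.o t ht = B.i q hq ≫ B.eb ≫ B.o (a :: t) hat := by
  rw [hB.2 t ht a hat]
  rfl

theorem i_eb_o_append (hB : B.Coherent) (hQpre : ∀ u v : List A, u ++ v ∈ Q → u ∈ Q)
    (hTsuf : ∀ u v : List A, u ++ v ∈ T → v ∈ T) (q m t : List A) (hq : q ∈ Q)
    (hqm : q ++ m ∈ Q) (ht : t ∈ T) (hmt : m ++ t ∈ T) :
    B.i q hq ≫ B.eb ≫ B.o (m ++ t) hmt = B.i (q ++ m) hqm ≫ B.eb ≫ B.o t ht := by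
  induction m generalizing q with
  | nil => simp
  | cons a m ih =>
    have hqa : q ++ [a] ∈ Q := hQpre _ m (by simpa using hqm)
    have hmt' : m ++ t ∈ T := hTsuf [a] _ hmt
    calc B.i q hq ≫ B.eb ≫ B.o (a :: m ++ t) hmt
        = B.i q hq ≫ B.δ a ≫ B.o (m ++ t) hmt' := (hB.i_δ_o_eq_i_eb_o_cons hq hmt' hmt).symm
      _ = B.i (q ++ [a]) hqa ≫ B.eb ≫ B.o (m ++ t) hmt' := hB.i_δ_o_eq_i_append_eb_o hq hqa hmt'
      _ = B.i (q ++ [a] ++ m) (by simpa using hqm) ≫ B.eb ≫ B.o t ht := ih _ hqa _ hmt'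
      _ = B.i (q ++ a :: m) hqm ≫ B.eb ≫ B.o t ht := by simp

theorem i_eb_o_eq_of_append_eq (hB : B.Coherent) (hQpre : ∀ u v : List A, u ++ v ∈ Q → u ∈ Q)
    (hTsuf : ∀ u v : List A, u ++ v ∈ T → v ∈ T) {q t q' t' : List A} (hq : q ∈ Q) (ht : t ∈ T)
    (hq' : q' ∈ Q) (ht' : t' ∈ T) (h : q ++ t = q' ++ t') :
    B.i q hq ≫ B.eb ≫ B.o t ht = B.i q' hq' ≫ B.eb ≫ B.o t' ht' := by
  rcases List.append_eq_append_iff.mp h with ⟨m, rfl, rfl⟩ | ⟨m, rfl, rfl⟩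
  · exact hB.i_eb_o_append hQpre hTsuf q m t' hq hq' ht' ht
  · exact (hB.i_eb_o_append hQpre hTsuf q' m t hq' hq ht ht').symm

theorem i_δ_o_eq_i_eb_o_of_append_eq (hB : B.Coherent)
    (hQpre : ∀ u v : List A, u ++ v ∈ Q → u ∈ Q) (hTsuf : ∀ u v : List A, u ++ v ∈ T → v ∈ T)
    {q t q' t' : List A} {a : A} (hq : q ∈ Q) (ht : t ∈ T) (hq' : q' ∈ Q) (ht' : t' ∈ T)
    (h : q ++ a :: t = q' ++ t') :
    B.i q hq ≫ B.δ a ≫ B.o t ht = B.i q' hq' ≫ B.eb ≫ B.o t' ht' := by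
  rcases List.append_cons_eq_append_cases h with ⟨m, -, rfl⟩ | ⟨m, rfl, -⟩
  · have hat : a :: t ∈ T := hTsuf m _ ht'
    rw [hB.i_δ_o_eq_i_eb_o_cons hq ht hat]
    exact hB.i_eb_o_eq_of_append_eq hQpre hTsuf hq hat hq' ht' h
  · have hqa : q ++ [a] ∈ Q := hQpre _ m (by simpa using hq')
    rw [hB.i_δ_o_eq_i_append_eb_o hq hqa ht]
    exact hB.i_eb_o_eq_of_append_eq hQpre hTsuf hqa ht hq' ht' (by simpa using h)

theorem i_δ_o_eq_i_δ_o_of_append_eq (hB : B.Coherent)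
    (hQpre : ∀ u v : List A, u ++ v ∈ Q → u ∈ Q) (hTsuf : ∀ u v : List A, u ++ v ∈ T → v ∈ T)
    {q t q' t' : List A} {a a' : A} (hq : q ∈ Q) (ht : t ∈ T) (hq' : q' ∈ Q) (ht' : t' ∈ T)
    (h : q ++ a :: t = q' ++ a' :: t') :
    B.i q hq ≫ B.δ a ≫ B.o t ht = B.i q' hq' ≫ B.δ a' ≫ B.o t' ht' := by
  rcases List.append_cons_eq_append_cons_cases h with ⟨rfl, rfl, rfl⟩ | ⟨m, rfl⟩ | ⟨m, rfl⟩
  · rfl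
  · have hqa : q ++ [a] ∈ Q := hQpre _ m (by simpa using hq')
    rw [hB.i_δ_o_eq_i_append_eb_o hq hqa ht,
      hB.i_δ_o_eq_i_eb_o_of_append_eq hQpre hTsuf hq' ht' hqa ht (by simpa using h.symm)]
  · have hqa : q' ++ [a'] ∈ Q := hQpre _ m (by simpa using hq)
    rw [hB.i_δ_o_eq_i_append_eb_o hq' hqa ht',
      hB.i_δ_o_eq_i_eb_o_of_append_eq hQpre hTsuf hq ht hqa ht' (by simpa using h)]

end Coherent

end Biauto

theorem stmt8_general {A : Type} {C : Type*} [Category C] {X Y : C}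
    (Q T : Set (List A))
    (hQpre : ∀ u v : List A, u ++ v ∈ Q → u ∈ Q)
    (hTsuf : ∀ u v : List A, u ++ v ∈ T → v ∈ T)
    (B : Biauto A X Y Q T) (hcoh : B.Coherent) :
    (∀ (q : List A) (hq : q ∈ Q) (q' : List A) (hq' : q' ∈ Q) (a a' : A)
        (t : List A) (ht : t ∈ T) (t' : List A) (ht' : t' ∈ T),
      q ++ [a] ++ t = q' ++ [a'] ++ t' →
      B.i q hq ≫ B.δ a ≫ B.o t ht = B.i q' hq' ≫ B.δ a' ≫ B.o t' ht') ∧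
    (∀ (q : List A) (hq : q ∈ Q) (q' : List A) (hq' : q' ∈ Q)
        (t : List A) (ht : t ∈ T) (t' : List A) (ht' : t' ∈ T),
      q ++ t = q' ++ t' →
      B.i q hq ≫ B.eb ≫ B.o t ht = B.i q' hq' ≫ B.eb ≫ B.o t' ht') ∧
    (∀ (q : List A) (hq : q ∈ Q) (a : A) (q' : List A) (hq' : q' ∈ Q)
        (t : List A) (ht : t ∈ T) (t' : List A) (ht' : t' ∈ T),
      q ++ [a] ++ t = q' ++ t' →
      B.i q hq ≫ B.δ a ≫ B.o t ht = B.i q' hq' ≫ B.eb ≫ B.o t' ht') :=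
  ⟨fun _ hq _ hq' _ _ _ ht _ ht' h =>
      hcoh.i_δ_o_eq_i_δ_o_of_append_eq hQpre hTsuf hq ht hq' ht' (by simpa using h),
    fun _ hq _ hq' _ ht _ ht' h => hcoh.i_eb_o_eq_of_append_eq hQpre hTsuf hq ht hq' ht' h,
    fun _ hq _ _ hq' _ ht _ ht' h =>
      hcoh.i_δ_o_eq_i_eb_o_of_append_eq hQpre hTsuf hq ht hq' ht' (by simpa using h)⟩

/-- in a coherent (Q,T)-biautomaton, the composite arrows only depend on the
underlying words. -/
theorem stmt8 {A : Type} [Fintype A] {C : Type*} [Category C] {X Y : C}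
    (Q T : Set (List A))
    (hQpre : ∀ u v : List A, u ++ v ∈ Q → u ∈ Q)
    (hTsuf : ∀ u v : List A, u ++ v ∈ T → v ∈ T)
    (hεQ : [] ∈ Q) (hεT : [] ∈ T)
    (B : Biauto A X Y Q T) (hcoh : B.Coherent) :
    (∀ (q : List A) (hq : q ∈ Q) (q' : List A) (hq' : q' ∈ Q) (a a' : A)
        (t : List A) (ht : t ∈ T) (t' : List A) (ht' : t' ∈ T),
      q ++ [a] ++ t = q' ++ [a'] ++ t' →
      B.i q hq ≫ B.δ a ≫ B.o t ht = B.i q' hq' ≫ B.δ a' ≫ B.o t' ht') ∧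
    (∀ (q : List A) (hq : q ∈ Q) (q' : List A) (hq' : q' ∈ Q)
        (t : List A) (ht : t ∈ T) (t' : List A) (ht' : t' ∈ T),
      q ++ t = q' ++ t' →
      B.i q hq ≫ B.eb ≫ B.o t ht = B.i q' hq' ≫ B.eb ≫ B.o t' ht') ∧
    (∀ (q : List A) (hq : q ∈ Q) (a : A) (q' : List A) (hq' : q' ∈ Q)
        (t : List A) (ht : t ∈ T) (t' : List A) (ht' : t' ∈ T),
      q ++ [a] ++ t = q' ++ t' →
      B.i q hq ≫ B.δ a ≫ B.o t ht = B.i q' hq' ≫ B.eb ≫ B.o t' ht') :=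
  stmt8_general Q T hQpre hTsuf B hcoh
end

section
/- Let QA = {q ++ [a] : q ∈ Q, a ∈ A} and suppose C has the coproducts ∐_Q X and ∐_{Q∪QA} X (with injections ι). Define Init_{Q,T}(ℓ) by: B1 = ∐_Q X, B2 = ∐_{Q∪QA} X, i_q = ι_q, ē the unique morphism with ē ∘ ι_q = ι_q (the injection of the larger coproduct) for all q ∈ Q, δ_a the unique morphism with δ_a ∘ ι_q = ι_{q ++ [a]} for all q ∈ Q, and o_t the unique morphism with o_t ∘ ι_w = ℓ(w ++ t) for all w ∈ Q ∪ QA. Then Init_{Q,T}(ℓ) is a coherent (Q,T)-biautomaton consistent with ℓ, and for every coherent (Q,T)-biautomaton B consistent with ℓ there exists a unique morphism of (Q,T)-biautomata from Init_{Q,T}(ℓ) to B. -/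
open CategoryTheory

/-! The initial biautomaton is built from two copowers of `X`. Maps out of `∐_Q X` are
determined by their restrictions along the injections, and maps out of `∐_{Q ∪ QA} X` by
their restrictions along `ē` and the `δ_a`, since every word of `QA` is `q ++ [a]` for a unique
`q` and `a`. Coherence of the target is exactly what makes the two descriptions of a word lying
in both `Q` and `QA` agree, which gives the second component of the morphism; consistency of
both biautomata then forces it to commute with the outputs. -/

def IsCopowerOn {C : Type*} [Category C] {J : Type*} (S : Set J) (X P : C)
    (ι : (j : J) → j ∈ S → (X ⟶ P)) : Prop :=
  ∀ (Z : C) (f : (j : J) → j ∈ S → (X ⟶ Z)), ∃! g : P ⟶ Z, ∀ j hj, ι j hj ≫ g = f j hj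

theorem IsCopowerOn.hom_ext {C : Type*} [Category C] {J : Type*} {S : Set J} {X P : C}
    {ι : (j : J) → j ∈ S → (X ⟶ P)} (hP : IsCopowerOn S X P ι) {Z : C} {g g' : P ⟶ Z}
    (h : ∀ j hj, ι j hj ≫ g = ι j hj ≫ g') : g = g' :=
  (hP Z fun j hj => ι j hj ≫ g').unique h fun _ _ => rfl

/-- The paper's `Q ∪ QA`. -/
abbrev unionSnoc {A : Type} (Q : Set (List A)) : Set (List A) :=
  Q ∪ {w | ∃ q ∈ Q, ∃ a : A, w = q ++ [a]}

namespace Biauto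

variable {A : Type} {C : Type*} [Category C] {X Y : C} {Q T : Set (List A)}
  {ℓ : List A → (X ⟶ Y)} {P1 P2 : C} {ι1 : (q : List A) → q ∈ Q → (X ⟶ P1)}
  {ι2 : (w : List A) → w ∈ unionSnoc Q → (X ⟶ P2)} {eb : P1 ⟶ P2} {δ : A → (P1 ⟶ P2)}
  {o : (t : List A) → t ∈ T → (P2 ⟶ Y)}

theorem hom_ext_of_comp_eb_of_comp_δ (hP2 : IsCopowerOn (unionSnoc Q) X P2 ι2)
    (heb : ∀ q hq, ι1 q hq ≫ eb = ι2 q (Set.mem_union_left _ hq))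
    (hδ : ∀ a q hq, ι1 q hq ≫ δ a = ι2 (q ++ [a]) (Set.mem_union_right _ ⟨q, hq, a, rfl⟩))
    {Z : C} {g g' : P2 ⟶ Z} (h_eb : ∀ q hq, ι1 q hq ≫ eb ≫ g = ι1 q hq ≫ eb ≫ g')
    (h_δ : ∀ a q hq, ι1 q hq ≫ δ a ≫ g = ι1 q hq ≫ δ a ≫ g') : g = g' := by
  refine hP2.hom_ext fun w hw => ?_
  rcases hw with hq | ⟨q, hq, a, rfl⟩
  · simpa only [← Category.assoc, heb] using h_eb w hq
  · simpa only [← Category.assoc, hδ] using h_δ a q hq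

theorem coherent_init (hP1 : IsCopowerOn Q X P1 ι1)
    (heb : ∀ q hq, ι1 q hq ≫ eb = ι2 q (Set.mem_union_left _ hq))
    (hδ : ∀ a q hq, ι1 q hq ≫ δ a = ι2 (q ++ [a]) (Set.mem_union_right _ ⟨q, hq, a, rfl⟩))
    (ho : ∀ t ht w hw, ι2 w hw ≫ o t ht = ℓ (w ++ t)) :
    (Biauto.mk P1 P2 ι1 δ eb o).Coherent := by
  refine ⟨fun q hq a h => by rw [hδ, heb], fun t ht a h => hP1.hom_ext fun q hq => ?_⟩
  simp only [← Category.assoc, hδ, heb, ho, List.append_assoc]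

theorem consistent_init
    (heb : ∀ q hq, ι1 q hq ≫ eb = ι2 q (Set.mem_union_left _ hq))
    (hδ : ∀ a q hq, ι1 q hq ≫ δ a = ι2 (q ++ [a]) (Set.mem_union_right _ ⟨q, hq, a, rfl⟩))
    (ho : ∀ t ht w hw, ι2 w hw ≫ o t ht = ℓ (w ++ t)) :
    (Biauto.mk P1 P2 ι1 δ eb o).Consistent ℓ :=
  ⟨fun q hq a t ht => by rw [← Category.assoc, hδ, ho],
    fun q hq t ht => by rw [← Category.assoc, heb, ho]⟩

/-- A word of `Q ∪ QA` is sent to `i_w ≫ ē` if `w ∈ Q` and to `i_q ≫ δ_a` if `w = q ++ [a]`;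
coherence of `B` makes these agree when both apply. -/
theorem exists_restriction_eq_of_coherent {B : Biauto A X Y Q T} (hB : B.Coherent)
    (w : List A) (hw : w ∈ unionSnoc Q) :
    ∃ g : X ⟶ B.B2, (∀ hq : w ∈ Q, g = B.i w hq ≫ B.eb) ∧
      ∀ q hq a, w = q ++ [a] → g = B.i q hq ≫ B.δ a := by
  by_cases hwQ : w ∈ Q
  · refine ⟨B.i w hwQ ≫ B.eb, fun _ => rfl, ?_⟩
    rintro q hq a rfl
    exact (hB.1 q hq a hwQ).symm
  · obtain ⟨q, hq, a, rfl⟩ := hw.resolve_left hwQ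
    refine ⟨B.i q hq ≫ B.δ a, fun h => absurd h hwQ, fun q' hq' a' hw' => ?_⟩
    obtain ⟨rfl, ha⟩ := List.append_inj' hw' rfl
    obtain rfl := List.singleton_inj.mp ha
    rfl

theorem exists_hom_comp_eb_comp_δ (hP1 : IsCopowerOn Q X P1 ι1)
    (hP2 : IsCopowerOn (unionSnoc Q) X P2 ι2)
    (heb : ∀ q hq, ι1 q hq ≫ eb = ι2 q (Set.mem_union_left _ hq))
    (hδ : ∀ a q hq, ι1 q hq ≫ δ a = ι2 (q ++ [a]) (Set.mem_union_right _ ⟨q, hq, a, rfl⟩))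
    {B : Biauto A X Y Q T} (hB : B.Coherent) {f1 : P1 ⟶ B.B1}
    (hf1 : ∀ q hq, ι1 q hq ≫ f1 = B.i q hq) :
    ∃ f2 : P2 ⟶ B.B2, eb ≫ f2 = f1 ≫ B.eb ∧ ∀ a, δ a ≫ f2 = f1 ≫ B.δ a := by
  choose F hF_eb hF_δ using exists_restriction_eq_of_coherent hB
  obtain ⟨f2, hf2, -⟩ := hP2 B.B2 F
  refine ⟨f2, hP1.hom_ext fun q hq => ?_, fun a => hP1.hom_ext fun q hq => ?_⟩
  · rw [← Category.assoc, heb, hf2, hF_eb q _ hq, ← Category.assoc, hf1]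
  · rw [← Category.assoc, hδ, hf2, hF_δ _ _ q hq a rfl, ← Category.assoc, hf1]

theorem comp_o_eq_of_consistent (hP2 : IsCopowerOn (unionSnoc Q) X P2 ι2)
    (heb : ∀ q hq, ι1 q hq ≫ eb = ι2 q (Set.mem_union_left _ hq))
    (hδ : ∀ a q hq, ι1 q hq ≫ δ a = ι2 (q ++ [a]) (Set.mem_union_right _ ⟨q, hq, a, rfl⟩))
    (ho : ∀ t ht w hw, ι2 w hw ≫ o t ht = ℓ (w ++ t))
    {B : Biauto A X Y Q T} (hB : B.Consistent ℓ) {f1 : P1 ⟶ B.B1} {f2 : P2 ⟶ B.B2}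
    (hf1 : ∀ q hq, ι1 q hq ≫ f1 = B.i q hq) (hf2_eb : eb ≫ f2 = f1 ≫ B.eb)
    (hf2_δ : ∀ a, δ a ≫ f2 = f1 ≫ B.δ a) (t : List A) (ht : t ∈ T) :
    f2 ≫ B.o t ht = o t ht := by
  have hinit := consistent_init heb hδ ho (T := T) (ℓ := ℓ)
  refine hom_ext_of_comp_eb_of_comp_δ hP2 heb hδ (fun q hq => ?_) (fun a q hq => ?_)
  · rw [reassoc_of% hf2_eb, reassoc_of% hf1, hB.2, hinit.2]
  · rw [reassoc_of% hf2_δ a, reassoc_of% hf1, hB.1, hinit.1]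

theorem isHom_init_unique (hP1 : IsCopowerOn Q X P1 ι1)
    (hP2 : IsCopowerOn (unionSnoc Q) X P2 ι2)
    (heb : ∀ q hq, ι1 q hq ≫ eb = ι2 q (Set.mem_union_left _ hq))
    (hδ : ∀ a q hq, ι1 q hq ≫ δ a = ι2 (q ++ [a]) (Set.mem_union_right _ ⟨q, hq, a, rfl⟩))
    {B : Biauto A X Y Q T} {f1 g1 : P1 ⟶ B.B1} {f2 g2 : P2 ⟶ B.B2}
    (hf : (Biauto.mk P1 P2 ι1 δ eb o).IsHom B f1 f2)
    (hg : (Biauto.mk P1 P2 ι1 δ eb o).IsHom B g1 g2) : f1 = g1 ∧ f2 = g2 := by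
  have h1 : f1 = g1 := hP1.hom_ext fun q hq => (hf.1 q hq).trans (hg.1 q hq).symm
  refine ⟨h1, hom_ext_of_comp_eb_of_comp_δ hP2 heb hδ (fun q hq => ?_) (fun a q hq => ?_)⟩
  · rw [hf.2.2.1, hg.2.2.1, h1]
  · rw [hf.2.1, hg.2.1, h1]

end Biauto

theorem stmt9_general {A : Type} {C : Type*} [Category C] {X Y : C}
    (ℓ : List A → (X ⟶ Y)) (Q T : Set (List A))
    (P1 : C) (ι1 : (q : List A) → q ∈ Q → (X ⟶ P1))
    (hP1 : ∀ (Z : C) (f : (q : List A) → q ∈ Q → (X ⟶ Z)),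
      ∃! g : P1 ⟶ Z, ∀ (q : List A) (hq : q ∈ Q), ι1 q hq ≫ g = f q hq)
    (P2 : C)
    (ι2 : (w : List A) → w ∈ Q ∪ {w | ∃ q ∈ Q, ∃ a : A, w = q ++ [a]} → (X ⟶ P2))
    (hP2 : ∀ (Z : C)
        (f : (w : List A) → w ∈ Q ∪ {w | ∃ q ∈ Q, ∃ a : A, w = q ++ [a]} → (X ⟶ Z)),
      ∃! g : P2 ⟶ Z, ∀ w hw, ι2 w hw ≫ g = f w hw)
    (eb : P1 ⟶ P2)
    (heb : ∀ (q : List A) (hq : q ∈ Q),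
      ι1 q hq ≫ eb = ι2 q (Set.mem_union_left _ hq))
    (δ : A → (P1 ⟶ P2))
    (hδ : ∀ (a : A) (q : List A) (hq : q ∈ Q),
      ι1 q hq ≫ δ a = ι2 (q ++ [a]) (Set.mem_union_right _ ⟨q, hq, a, rfl⟩))
    (o : (t : List A) → t ∈ T → (P2 ⟶ Y))
    (ho : ∀ (t : List A) (ht : t ∈ T) (w : List A) hw,
      ι2 w hw ≫ o t ht = ℓ (w ++ t)) :
    (Biauto.mk P1 P2 ι1 δ eb o).Coherent ∧
    (Biauto.mk P1 P2 ι1 δ eb o).Consistent ℓ ∧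
    ∀ B : Biauto A X Y Q T, B.Coherent → B.Consistent ℓ →
      ∃! p : (P1 ⟶ B.B1) × (P2 ⟶ B.B2),
        (Biauto.mk P1 P2 ι1 δ eb o).IsHom B p.1 p.2 := by
  refine ⟨Biauto.coherent_init hP1 heb hδ ho, Biauto.consistent_init heb hδ ho,
    fun B hBcoh hBcons => ?_⟩
  obtain ⟨f1, hf1, -⟩ := hP1 B.B1 B.i
  obtain ⟨f2, hf2_eb, hf2_δ⟩ := Biauto.exists_hom_comp_eb_comp_δ hP1 hP2 heb hδ hBcoh hf1
  have hom : (Biauto.mk P1 P2 ι1 δ eb o).IsHom B f1 f2 :=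
    ⟨hf1, hf2_δ, hf2_eb, Biauto.comp_o_eq_of_consistent hP2 heb hδ ho hBcons hf1 hf2_eb hf2_δ⟩
  refine ⟨(f1, f2), hom, fun p hp => ?_⟩
  obtain ⟨h1, h2⟩ := Biauto.isHom_init_unique hP1 hP2 heb hδ hp hom
  exact Prod.ext h1 h2

/-- the biautomaton built on the copowers `∐_Q X` and `∐_{Q∪QA} X` is a
coherent (Q,T)-biautomaton consistent with `ℓ`, and it is initial among coherent
(Q,T)-biautomata consistent with `ℓ`. -/
theorem stmt9 {A : Type} [Fintype A] {C : Type*} [Category C] {X Y : C}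
    (ℓ : List A → (X ⟶ Y)) (Q T : Set (List A))
    (hQpre : ∀ u v : List A, u ++ v ∈ Q → u ∈ Q)
    (hTsuf : ∀ u v : List A, u ++ v ∈ T → v ∈ T)
    (hεQ : [] ∈ Q) (hεT : [] ∈ T)
    (P1 : C) (ι1 : (q : List A) → q ∈ Q → (X ⟶ P1))
    (hP1 : ∀ (Z : C) (f : (q : List A) → q ∈ Q → (X ⟶ Z)),
      ∃! g : P1 ⟶ Z, ∀ (q : List A) (hq : q ∈ Q), ι1 q hq ≫ g = f q hq)
    (P2 : C)
    (ι2 : (w : List A) → w ∈ Q ∪ {w | ∃ q ∈ Q, ∃ a : A, w = q ++ [a]} → (X ⟶ P2))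
    (hP2 : ∀ (Z : C)
        (f : (w : List A) → w ∈ Q ∪ {w | ∃ q ∈ Q, ∃ a : A, w = q ++ [a]} → (X ⟶ Z)),
      ∃! g : P2 ⟶ Z, ∀ w hw, ι2 w hw ≫ g = f w hw)
    (eb : P1 ⟶ P2)
    (heb : ∀ (q : List A) (hq : q ∈ Q),
      ι1 q hq ≫ eb = ι2 q (Set.mem_union_left _ hq))
    (δ : A → (P1 ⟶ P2))
    (hδ : ∀ (a : A) (q : List A) (hq : q ∈ Q),
      ι1 q hq ≫ δ a = ι2 (q ++ [a]) (Set.mem_union_right _ ⟨q, hq, a, rfl⟩))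
    (o : (t : List A) → t ∈ T → (P2 ⟶ Y))
    (ho : ∀ (t : List A) (ht : t ∈ T) (w : List A) hw,
      ι2 w hw ≫ o t ht = ℓ (w ++ t)) :
    (Biauto.mk P1 P2 ι1 δ eb o).Coherent ∧
    (Biauto.mk P1 P2 ι1 δ eb o).Consistent ℓ ∧
    ∀ B : Biauto A X Y Q T, B.Coherent → B.Consistent ℓ →
      ∃! p : (P1 ⟶ B.B1) × (P2 ⟶ B.B2),
        (Biauto.mk P1 P2 ι1 δ eb o).IsHom B p.1 p.2 :=
  stmt9_general ℓ Q T P1 ι1 hP1 P2 ι2 hP2 eb heb δ hδ o ho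
end

section
/- In the setting of the chosen (E,M)-factorizations N_{Q,T} of the canonical morphisms c_{Q,T}, for all Q ⊆ Q' and T ⊆ T' the square of canonical morphisms commutes: u_{Q⊆Q',T} ∘ v_{Q,T⊆T'} = v_{Q',T⊆T'} ∘ u_{Q⊆Q',T'} as morphisms N_{Q,T'} → N_{Q',T}. -/
open CategoryTheory

/-- The setting of the chosen `(E,M)`-factorizations `N Q T` of the canonical morphisms
`c_{Q,T} : ∐_Q X ⟶ ∏_T Y` induced by the language `ℓ`: for every `Q` there is a copower
`P Q` of `X` over `Q` (with injections `ι`), for every `T` a power `R T` of `Y` over `T`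
(with projections `π`), and for all `Q, T` a chosen factorization
`e Q T : P Q ⟶ N Q T` in `E`, `m Q T : N Q T ⟶ R T` in `M` of `c_{Q,T}`. -/
structure Setup (A : Type) {C : Type*} [Category C] (E M : MorphismProperty C)
    (X Y : C) (ℓ : List A → (X ⟶ Y)) where
  P : Set (List A) → C
  ι : ∀ (Q : Set (List A)) (q : List A), q ∈ Q → (X ⟶ P Q)
  hP : ∀ (Q : Set (List A)) (Z : C) (f : ∀ q : List A, q ∈ Q → (X ⟶ Z)),
    ∃! g : P Q ⟶ Z, ∀ (q : List A) (hq : q ∈ Q), ι Q q hq ≫ g = f q hq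
  R : Set (List A) → C
  π : ∀ (T : Set (List A)) (t : List A), t ∈ T → (R T ⟶ Y)
  hR : ∀ (T : Set (List A)) (Z : C) (f : ∀ t : List A, t ∈ T → (Z ⟶ Y)),
    ∃! g : Z ⟶ R T, ∀ (t : List A) (ht : t ∈ T), g ≫ π T t ht = f t ht
  N : Set (List A) → Set (List A) → C
  e : ∀ Q T : Set (List A), P Q ⟶ N Q T
  m : ∀ Q T : Set (List A), N Q T ⟶ R T
  he : ∀ Q T : Set (List A), E (e Q T)
  hm : ∀ Q T : Set (List A), M (m Q T)
  hfact : ∀ (Q T : Set (List A)) (q : List A) (hq : q ∈ Q) (t : List A) (ht : t ∈ T),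
    ι Q q hq ≫ e Q T ≫ m Q T ≫ π T t ht = ℓ (q ++ t)

namespace Setup

variable {A : Type} {C : Type*} [Category C] {E M : MorphismProperty C}
  {X Y : C} {ℓ : List A → (X ⟶ Y)}

/-- `u` is the canonical morphism `u_{Q⊆Q',T} : N Q T ⟶ N Q' T`:
it satisfies `u ∘ e_{Q,T} = e_{Q',T} ∘ (canonical inclusion)` and
`m_{Q',T} ∘ u = m_{Q,T}`. -/
def IsU (S : Setup A E M X Y ℓ) {Q Q' : Set (List A)} (T : Set (List A))
    (h : Q ⊆ Q') (u : S.N Q T ⟶ S.N Q' T) : Prop :=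
  (∀ (q : List A) (hq : q ∈ Q),
    S.ι Q q hq ≫ S.e Q T ≫ u = S.ι Q' q (h hq) ≫ S.e Q' T) ∧
  u ≫ S.m Q' T = S.m Q T

/-- `v` is the canonical morphism `v_{Q,T⊆T'} : N Q T' ⟶ N Q T`:
it satisfies `v ∘ e_{Q,T'} = e_{Q,T}` and
`m_{Q,T} ∘ v = (canonical restriction) ∘ m_{Q,T'}`. -/
def IsV (S : Setup A E M X Y ℓ) {T T' : Set (List A)} (Q : Set (List A))
    (h : T ⊆ T') (v : S.N Q T' ⟶ S.N Q T) : Prop :=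
  (S.e Q T' ≫ v = S.e Q T) ∧
  (∀ (t : List A) (ht : t ∈ T),
    v ≫ S.m Q T ≫ S.π T t ht = S.m Q T' ≫ S.π T' t (h ht))

end Setup

/-! Both composites fill the square formed by `e_{Q,T'}` and `m_{Q',T}`, with top side the
inclusion-then-`e_{Q',T}` and bottom side `m_{Q,T'}`-then-restriction; the diagonal of such a
square is unique. -/

namespace FactSys

variable {C : Type*} [Category C] {E M : MorphismProperty C}

theorem hom_ext (fs : FactSys E M) {X Y Z W : C} {e : X ⟶ Y} {m : Z ⟶ W} (he : E e) (hm : M m)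
    {f g : Y ⟶ Z} (he_comp : e ≫ f = e ≫ g) (hcomp_m : f ≫ m = g ≫ m) : f = g := by
  obtain ⟨d, -, hd⟩ := fs.diag e m (e ≫ f) (f ≫ m) he hm (Category.assoc _ _ _).symm
  exact (hd f ⟨rfl, rfl⟩).trans (hd g ⟨he_comp.symm, hcomp_m.symm⟩).symm

end FactSys

namespace Setup

variable {A : Type} {C : Type*} [Category C] {E M : MorphismProperty C}
  {X Y : C} {ℓ : List A → (X ⟶ Y)} (S : Setup A E M X Y ℓ)

theorem copower_hom_ext {Q : Set (List A)} {Z : C} {f g : S.P Q ⟶ Z}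
    (h : ∀ (q : List A) (hq : q ∈ Q), S.ι Q q hq ≫ f = S.ι Q q hq ≫ g) : f = g := by
  obtain ⟨k, -, hk⟩ := S.hP Q Z fun q hq => S.ι Q q hq ≫ g
  exact (hk f h).trans (hk g fun _ _ => rfl).symm

theorem power_hom_ext {T : Set (List A)} {Z : C} {f g : Z ⟶ S.R T}
    (h : ∀ (t : List A) (ht : t ∈ T), f ≫ S.π T t ht = g ≫ S.π T t ht) : f = g := by
  obtain ⟨k, -, hk⟩ := S.hR T Z fun t ht => g ≫ S.π T t ht
  exact (hk f h).trans (hk g fun _ _ => rfl).symm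

end Setup

theorem stmt14_general {A : Type} {C : Type*} [Category C]
    (E M : MorphismProperty C) (fs : FactSys E M) {X Y : C}
    (ℓ : List A → (X ⟶ Y)) (S : Setup A E M X Y ℓ)
    (Q Q' T T' : Set (List A)) (hQ : Q ⊆ Q') (hT : T ⊆ T')
    (u : S.N Q T' ⟶ S.N Q' T') (hu : S.IsU T' hQ u)
    (u' : S.N Q T ⟶ S.N Q' T) (hu' : S.IsU T hQ u')
    (v : S.N Q T' ⟶ S.N Q T) (hv : S.IsV Q hT v)
    (v' : S.N Q' T' ⟶ S.N Q' T) (hv' : S.IsV Q' hT v') :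
    v ≫ u' = u ≫ v' := by
  refine fs.hom_ext (S.he Q T') (S.hm Q' T) ?_ ?_
  · refine S.copower_hom_ext fun q hq => ?_
    rw [reassoc_of% hv.1, hu'.1, reassoc_of% (hu.1 q hq), hv'.1]
  · refine S.power_hom_ext fun t ht => ?_
    simp only [Category.assoc]
    rw [reassoc_of% hu'.2, hv.2, hv'.2, reassoc_of% hu.2]

/-- the square of canonical morphisms between the factorizations commutes:
`u_{Q⊆Q',T} ∘ v_{Q,T⊆T'} = v_{Q',T⊆T'} ∘ u_{Q⊆Q',T'}`. -/
theorem stmt14 {A : Type} [Fintype A] {C : Type*} [Category C]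
    (E M : MorphismProperty C) (fs : FactSys E M) {X Y : C}
    (ℓ : List A → (X ⟶ Y)) (S : Setup A E M X Y ℓ)
    (Q Q' T T' : Set (List A)) (hQ : Q ⊆ Q') (hT : T ⊆ T')
    (u : S.N Q T' ⟶ S.N Q' T') (hu : S.IsU T' hQ u)
    (u' : S.N Q T ⟶ S.N Q' T) (hu' : S.IsU T hQ u')
    (v : S.N Q T' ⟶ S.N Q T) (hv : S.IsV Q hT v)
    (v' : S.N Q' T' ⟶ S.N Q' T) (hv' : S.IsV Q' hT v') :
    v ≫ u' = u ≫ v' :=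
  stmt14_general E M fs ℓ S Q Q' T T' hQ hT u hu u' hu' v hv v' hv'
end
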